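/- The generalized Petersen graph P(7,2) has 14 vertices, girth 5, and domination number 5; in particular its domination number exceeds one third of its order. -/

import Mathlib

/-- `S` is a dominating set of `G`: every vertex not in `S` is adjacent to a vertex in `S`. -/
def SimpleGraph.IsDomSet {V : Type*} (G : SimpleGraph V) (S : Finset V) : Prop :=
  ∀ v, v ∉ S → ∃ u ∈ S, G.Adj u v

/-- The domination number of a finite graph. -/
noncomputable def SimpleGraph.domNum {V : Type*} [Fintype V] (G : SimpleGraph V) : ℕ :=
  sInf {n | ∃ S : Finset V, G.IsDomSet S ∧ S.card = n}

/-- The generalized Petersen graph `P(7,2)`: the outer vertices `Sum.inl i` form a `7`-cycle,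
each outer vertex `Sum.inl i` is joined to the inner vertex `Sum.inr i`, and the inner vertices
are joined by edges `Sum.inr i — Sum.inr (i+2)` (indices modulo `7`). -/
def genPetersen72 : SimpleGraph (ZMod 7 ⊕ ZMod 7) :=
  SimpleGraph.fromRel (fun x y =>
    match x, y with
    | Sum.inl i, Sum.inl j => j = i + 1
    | Sum.inl i, Sum.inr j => i = j
    | Sum.inr i, Sum.inr j => j = i + 2
    | _, _ => False)

/-!
Every vertex of `P(7,2)` has degree `3`, so `4` closed neighbourhoods cover at most `16` of
the `14` vertices and counting only gives `γ ≥ 4`; that no `4`-set dominates is settled by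
checking the `C(14,4) = 1001` candidates, enumerated as increasing quadruples in a fixed
ordering of the vertices. Similarly, a finite check shows there are no triangles and every
closed `4`-walk backtracks, so every cycle has length at least `5`, while `a₀ a₁ a₂ b₂ b₀`
is a `5`-cycle and `{a₀, a₁, a₂, b₄, b₅}` is a dominating set.
-/

theorem Finset.exists_lt_lt_lt_eq_of_card_eq_four {α β : Type*} [DecidableEq α] [LinearOrder β]
    (e : β ≃ α) {s : Finset α} (hs : s.card = 4) :
    ∃ i j k l : β, i < j ∧ j < k ∧ k < l ∧ s = {e i, e j, e k, e l} := by
  have ht : (s.map e.symm.toEmbedding).card = 4 := by rw [Finset.card_map, hs]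
  set f := (s.map e.symm.toEmbedding).orderEmbOfFin ht
  refine ⟨f 0, f 1, f 2, f 3, by simp, by simp, by simp, ?_⟩
  ext x
  have hx : x ∈ s ↔ e.symm x ∈ Set.range f := by simp [f]
  simp [hx, Fin.exists_fin_succ, Equiv.symm_apply_eq, eq_comm]

namespace SimpleGraph

variable {V : Type*} {G : SimpleGraph V}

theorem five_le_egirth (h3 : ∀ a b c, G.Adj a b → G.Adj b c → ¬ G.Adj c a)
    (h4 : ∀ a b c d, G.Adj a b → G.Adj b c → G.Adj c d → G.Adj d a → a = c ∨ b = d) :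
    5 ≤ G.egirth := by
  refine le_egirth.2 fun u w hw => ?_
  set v := w.getVert
  have hadj {i : ℕ} (hi : i < w.length) : G.Adj (v i) (v (i + 1)) := w.adj_getVert_succ hi
  have hv0 : v w.length = v 0 := by simp [v, Walk.getVert_length, Walk.getVert_zero]
  have hne {i j : ℕ} (hi : 1 ≤ i ∧ i ≤ w.length) (hj : 1 ≤ j ∧ j ≤ w.length)
      (hij : i ≠ j) : v i ≠ v j := fun h => hij (hw.getVert_injOn hi hj h)
  have h3le := hw.three_le_length
  by_contra! hlt
  obtain hlen | hlen : w.length = 3 ∨ w.length = 4 := by norm_cast at hlt; omega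
  · rw [hlen] at hv0
    exact h3 (v 0) (v 1) (v 2) (hadj (by omega)) (hadj (by omega)) (hv0 ▸ hadj (by omega))
  · rw [hlen] at hv0
    obtain h | h := h4 (v 0) (v 1) (v 2) (v 3) (hadj (by omega)) (hadj (by omega))
      (hadj (by omega)) (hv0 ▸ hadj (by omega))
    · exact hne (i := 4) (j := 2) (by omega) (by omega) (by omega) (hv0.trans h)
    · exact hne (i := 1) (j := 3) (by omega) (by omega) (by omega) h

instance [Fintype V] [DecidableEq V] [DecidableRel G.Adj] (S : Finset V) :
    Decidable (G.IsDomSet S) :=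
  inferInstanceAs (Decidable (∀ v, v ∉ S → ∃ u ∈ S, G.Adj u v))

theorem IsDomSet.mono {S T : Finset V} (hS : G.IsDomSet S) (hST : S ⊆ T) : G.IsDomSet T := by
  intro v hv
  obtain ⟨u, hu, huv⟩ := hS v fun h => hv (hST h)
  exact ⟨u, hST hu, huv⟩

variable [Fintype V]

theorem isDomSet_univ : G.IsDomSet Finset.univ := fun v hv => absurd (Finset.mem_univ v) hv

theorem domNum_le_card {S : Finset V} (hS : G.IsDomSet S) : G.domNum ≤ S.card :=
  Nat.sInf_le ⟨S, hS, rfl⟩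

theorem exists_isDomSet_card_eq_domNum : ∃ S, G.IsDomSet S ∧ S.card = G.domNum :=
  Nat.sInf_mem (s := {n | ∃ S : Finset V, G.IsDomSet S ∧ S.card = n})
    ⟨_, Finset.univ, isDomSet_univ, rfl⟩

theorem lt_domNum {k : ℕ} (hk : k ≤ Fintype.card V)
    (h : ∀ S : Finset V, S.card = k → ¬ G.IsDomSet S) : k < G.domNum := by
  classical
  by_contra! hle
  obtain ⟨S, hS, hcard⟩ := exists_isDomSet_card_eq_domNum (G := G)
  obtain ⟨T, hST, hT⟩ := Finset.exists_superset_card_eq (hcard ▸ hle) hk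
  exact h T hT (hS.mono hST)

end SimpleGraph

namespace genPetersen72

open SimpleGraph

instance : DecidableRel genPetersen72.Adj := fun x y => by
  unfold genPetersen72 SimpleGraph.fromRel
  cases x <;> cases y <;> dsimp <;> infer_instance

theorem not_adj_of_adj_of_adj : ∀ a b c, genPetersen72.Adj a b → genPetersen72.Adj b c →
    ¬ genPetersen72.Adj c a := by
  decide +kernel

set_option synthInstance.maxSize 2000 in
theorem eq_or_eq_of_adj_of_adj_of_adj_of_adj : ∀ a b c d,
    genPetersen72.Adj a b → genPetersen72.Adj b c → genPetersen72.Adj c d →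
      genPetersen72.Adj d a → a = c ∨ b = d := by
  decide +kernel

def pentagon : genPetersen72.Walk (.inl 0) (.inl 0) :=
  .cons (v := .inl 1) (by decide) <| .cons (v := .inl 2) (by decide) <|
    .cons (v := .inr 2) (by decide) <| .cons (v := .inr 0) (by decide) <|
    .cons (by decide) .nil

theorem pentagon_isCycle : pentagon.IsCycle :=
  (Walk.cons_isCycle_iff _ _).2 ⟨(Walk.isPath_def _).2 (by decide), by decide⟩

theorem egirth_eq_five : genPetersen72.egirth = 5 :=
  le_antisymm (egirth_le_length pentagon_isCycle)
    (five_le_egirth not_adj_of_adj_of_adj eq_or_eq_of_adj_of_adj_of_adj_of_adj)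

def equivFin : Fin 14 ≃ ZMod 7 ⊕ ZMod 7 := (finSumFinEquiv : Fin 7 ⊕ Fin 7 ≃ Fin 14).symm

theorem not_isDomSet_four : ∀ i j k l : Fin 14, i < j → j < k → k < l →
    ¬ genPetersen72.IsDomSet {equivFin i, equivFin j, equivFin k, equivFin l} := by
  decide +kernel

theorem not_isDomSet_of_card_eq_four {S : Finset (ZMod 7 ⊕ ZMod 7)} (hS : S.card = 4) :
    ¬ genPetersen72.IsDomSet S := by
  obtain ⟨i, j, k, l, hij, hjk, hkl, rfl⟩ :=
    Finset.exists_lt_lt_lt_eq_of_card_eq_four equivFin hS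
  exact not_isDomSet_four i j k l hij hjk hkl

theorem isDomSet_five : genPetersen72.IsDomSet {.inl 0, .inl 1, .inl 2, .inr 4, .inr 5} := by
  decide

theorem domNum_eq_five : genPetersen72.domNum = 5 :=
  le_antisymm (domNum_le_card isDomSet_five)
    (lt_domNum (by simp) fun _ => not_isDomSet_of_card_eq_four)

end genPetersen72

/-- The generalized Petersen graph `P(7,2)` has `14` vertices, girth `5`, and domination
number `5`; in particular its domination number exceeds one third of its order. -/
theorem genPetersen72_props :
    Fintype.card (ZMod 7 ⊕ ZMod 7) = 14 ∧
    genPetersen72.egirth = 5 ∧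
    genPetersen72.domNum = 5 ∧
    Fintype.card (ZMod 7 ⊕ ZMod 7) < 3 * genPetersen72.domNum := by
  refine ⟨by simp, genPetersen72.egirth_eq_five, genPetersen72.domNum_eq_five, ?_⟩
  simp [genPetersen72.domNum_eq_five]
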